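/- Let ⟨T, Σ, C₁ ⊑ C₂⟩ be an EL TBox abduction problem with T in normal form and ⊤-free, Φ its first-order translation and Φ_p its presaturation. Then every constructible hypothesis of the problem can be built from prime implicates in PI^{g+}_Σ(Φ) and PI^{g-}_Σ(Φ) each of which has a resolution derivation from Φ_p in which every resolvent contains at most one variable. -/
import Mathlib


namespace ELAbd

/-! ### EL concepts, TBoxes, semantics -/

inductive ELConcept : Type where
  | top : ELConcept
  | atom : ℕ → ELConcept
  | conj : ELConcept → ELConcept → ELConcept
  | ex : ℕ → ELConcept → ELConcept
deriving DecidableEq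

abbrev CI := ELConcept × ELConcept
abbrev TBox := Finset CI

structure Interp (α : Type) where
  conc : ℕ → Set α
  role : ℕ → Set (α × α)

def ELConcept.sem {α : Type} (I : Interp α) : ELConcept → Set α
  | .top => Set.univ
  | .atom A => I.conc A
  | .conj C D => C.sem I ∩ D.sem I
  | .ex r C => {d | ∃ e, (d, e) ∈ I.role r ∧ e ∈ C.sem I}

def Models {α : Type} (I : Interp α) (T : TBox) : Prop :=
  ∀ ci ∈ T, ci.1.sem I ⊆ ci.2.sem I

def Entails (T : TBox) (C D : ELConcept) : Prop :=
  ∀ (α : Type) (I : Interp α), Models I T → C.sem I ⊆ D.sem I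

def EntailsCI (T : TBox) (ci : CI) : Prop := Entails T ci.1 ci.2

def TEntails (T T' : TBox) : Prop :=
  ∀ (α : Type) (I : Interp α), Models I T → Models I T'

def TEquiv (T T' : TBox) : Prop := TEntails T T' ∧ TEntails T' T

/-- Equality of concepts modulo the convention that conjunctions are read as
sets (associativity, commutativity, idempotence, `⊤` as empty conjunction). -/
inductive CEq : ELConcept → ELConcept → Prop
  | refl (C) : CEq C C
  | symm {C D} : CEq C D → CEq D C
  | trans {C D E} : CEq C D → CEq D E → CEq C E
  | congr_conj {C C' D D'} : CEq C C' → CEq D D' → CEq (.conj C D) (.conj C' D')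
  | congr_ex {r C C'} : CEq C C' → CEq (.ex r C) (.ex r C')
  | comm (C D) : CEq (.conj C D) (.conj D C)
  | assoc (C D E) : CEq (.conj (.conj C D) E) (.conj C (.conj D E))
  | idem (C) : CEq (.conj C C) C
  | top_unit (C) : CEq (.conj .top C) C

/-- The relation `≼⊓` on concepts. -/
inductive PrecSq : ELConcept → ELConcept → Prop
  | refl (C) : PrecSq C C
  | conjL {C D'} (D'') : PrecSq C D' → PrecSq C (.conj D' D'')
  | ex (r) {C' D'} : PrecSq C' D' → PrecSq (.ex r C') (.ex r D')

def ELConcept.concNames : ELConcept → Set ℕ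
  | .top => ∅
  | .atom A => {A}
  | .conj C D => C.concNames ∪ D.concNames
  | .ex _ C => C.concNames

def ELConcept.roleNames : ELConcept → Set ℕ
  | .top => ∅
  | .atom _ => ∅
  | .conj C D => C.roleNames ∪ D.roleNames
  | .ex r C => {r} ∪ C.roleNames

def ELConcept.size : ELConcept → ℕ
  | .top => 1
  | .atom _ => 1
  | .conj C D => C.size + D.size + 1
  | .ex _ C => C.size + 1

def ELConcept.exCount : ELConcept → ℕ
  | .top => 0
  | .atom _ => 0
  | .conj C D => C.exCount + D.exCount
  | .ex _ C => C.exCount + 1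

def tboxSize (T : TBox) : ℕ := T.sum (fun ci => ci.1.size + ci.2.size)

def tboxConcNames (T : TBox) : Set ℕ :=
  {A | ∃ ci ∈ T, A ∈ ci.1.concNames ∪ ci.2.concNames}

def tboxRoleNames (T : TBox) : Set ℕ :=
  {r | ∃ ci ∈ T, r ∈ ci.1.roleNames ∪ ci.2.roleNames}

/-- Normal form (simultaneously `⊤`-free): every CI has one of the four shapes
`A ⊑ B`, `A₁ ⊓ A₂ ⊑ B`, `∃r.A ⊑ B`, `A ⊑ ∃r.B` with atomic concepts. -/
def NFci (ci : CI) : Prop :=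
  (∃ A B, ci = (ELConcept.atom A, ELConcept.atom B)) ∨
  (∃ A₁ A₂ B, ci = (ELConcept.conj (.atom A₁) (.atom A₂), ELConcept.atom B)) ∨
  (∃ r A B, ci = (ELConcept.ex r (.atom A), ELConcept.atom B)) ∨
  (∃ A r B, ci = (ELConcept.atom A, ELConcept.ex r (.atom B)))

def NormalForm (T : TBox) : Prop := ∀ ci ∈ T, NFci ci

/-- Normal form where the components may also be `⊤`. -/
def AtomTop (C : ELConcept) : Prop := C = .top ∨ ∃ A, C = ELConcept.atom A

def NFciTop (ci : CI) : Prop :=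
  (AtomTop ci.1 ∧ AtomTop ci.2) ∨
  (∃ A₁ A₂, ci.1 = ELConcept.conj A₁ A₂ ∧ AtomTop A₁ ∧ AtomTop A₂ ∧ AtomTop ci.2) ∨
  (∃ r A, ci.1 = ELConcept.ex r A ∧ AtomTop A ∧ AtomTop ci.2) ∨
  (∃ r B, ci.2 = ELConcept.ex r B ∧ AtomTop B ∧ AtomTop ci.1)

def NormalFormTop (T : TBox) : Prop := ∀ ci ∈ T, NFciTop ci

/-! ### EL description trees -/

noncomputable def conjOf (s : Finset ℕ) : ELConcept :=
  (s.toList.map ELConcept.atom).foldr ELConcept.conj ELConcept.top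

structure DescTree where
  V : Finset ℕ
  root : ℕ
  E : Finset (ℕ × ℕ × ℕ)      -- (v, r, w) : edge from v to w labeled r
  label : ℕ → Finset ℕ
  dep : ℕ → ℕ
  root_mem : root ∈ V
  edge_mem : ∀ e ∈ E, e.1 ∈ V ∧ e.2.2 ∈ V
  parent_unique : ∀ e ∈ E, ∀ e' ∈ E, e.2.2 = e'.2.2 → e = e'
  parent_exists : ∀ v ∈ V, v ≠ root → ∃ e ∈ E, e.2.2 = v
  dep_root : dep root = 0
  dep_edge : ∀ e ∈ E, dep e.2.2 = dep e.1 + 1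

noncomputable def DescTree.conceptAt (t : DescTree) : ℕ → ℕ → ELConcept
  | 0, v => conjOf (t.label v)
  | n + 1, v =>
      ((t.label v).toList.map ELConcept.atom ++
        (t.E.filter (fun e => e.1 = v)).toList.map
          (fun e => ELConcept.ex e.2.1 (t.conceptAt n e.2.2))).foldr ELConcept.conj ELConcept.top

/-- The concept `C_𝔗` represented by a description tree. -/
noncomputable def DescTree.concept (t : DescTree) : ELConcept := t.conceptAt t.V.card t.root

/-- `t` is a description tree for the concept `D` (concept equality is taken modulo
the conjunctions-as-sets convention). -/
def Represents (t : DescTree) (D : ELConcept) : Prop := CEq t.concept D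

/-- Weak homomorphism from `src` to `tgt`. -/
def WeakHom (src tgt : DescTree) (φ : ℕ → ℕ) : Prop :=
  φ src.root = tgt.root ∧ ∀ e ∈ src.E, (φ e.1, e.2.1, φ e.2.2) ∈ tgt.E

/-- `T`-homomorphism from `src` to `tgt`. -/
def THom (T : TBox) (src tgt : DescTree) (φ : ℕ → ℕ) : Prop :=
  WeakHom src tgt φ ∧
  ∀ w ∈ src.V, Entails T (conjOf (tgt.label (φ w))) (conjOf (src.label w))

/-! ### Abduction problems, hypotheses, connection minimality -/

inductive AtomConj (S : Set ℕ) : ELConcept → Prop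
  | atom {A} : A ∈ S → AtomConj S (.atom A)
  | conj {C D} : AtomConj S C → AtomConj S D → AtomConj S (.conj C D)

def IsHypothesis (T : TBox) (S : Set ℕ) (C1 C2 : ℕ) (H : TBox) : Prop :=
  (∀ ci ∈ H, (AtomConj S ci.1 ∨ ci.1 = ELConcept.top) ∧ AtomConj S ci.2) ∧
  Entails (T ∪ H) (.atom C1) (.atom C2) ∧
  ∀ ci ∈ H, ¬ EntailsCI T ci

def BuiltOver (S : Set ℕ) (C : ELConcept) : Prop := C.concNames ⊆ S

/-- The TBox determined by condition (4) of the definition of connection minimality. -/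
def hypSetOf (T : TBox) (t1 t2 : DescTree) (φ : ℕ → ℕ) : Set CI :=
  {ci | ∃ w ∈ t2.V, ci = (conjOf (t1.label (φ w)), conjOf (t2.label w)) ∧
        ¬ EntailsCI T ci}

/-- Conditions (1)–(4) of connection minimality, with explicit witnessing
description trees `t1`, `t2` for `D1`, `D2` and the weak homomorphism `φ`
from `𝔗_{D₂}` to `𝔗_{D₁}`. -/
def ConnMinimalWit (T : TBox) (S : Set ℕ) (C1 C2 : ℕ) (H : TBox)
    (D1 D2 : ELConcept) (t1 t2 : DescTree) (φ : ℕ → ℕ) : Prop :=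
  BuiltOver S D1 ∧ BuiltOver S D2 ∧
  Represents t1 D1 ∧ Represents t2 D2 ∧
  Entails T (.atom C1) D1 ∧
  Entails T D2 (.atom C2) ∧
  (∀ D2', Entails T D2' (.atom C2) → PrecSq D2' D2 → PrecSq D2 D2') ∧
  WeakHom t2 t1 φ ∧
  (↑H : Set CI) = hypSetOf T t1 t2 φ

def ConnMinimal (T : TBox) (S : Set ℕ) (C1 C2 : ℕ) (H : TBox) : Prop :=
  IsHypothesis T S C1 C2 H ∧
  ∃ D1 D2 t1 t2 φ, ConnMinimalWit T S C1 C2 H D1 D2 t1 t2 φ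

/-- Packedness of a witness: no alternative `D₁'`, `φ'` (for the same `D₂`, `t₂`)
strictly enlarges one of the left-hand side labels while keeping all others. -/
def PackedWit (T : TBox) (S : Set ℕ) (C1 : ℕ) (t1 t2 : DescTree) (φ : ℕ → ℕ) : Prop :=
  ¬ ∃ (D1' : ELConcept) (t1' : DescTree) (φ' : ℕ → ℕ) (w : ℕ),
      BuiltOver S D1' ∧ Represents t1' D1' ∧ Entails T (.atom C1) D1' ∧
      WeakHom t2 t1' φ' ∧ w ∈ t2.V ∧
      t1.label (φ w) ⊂ t1'.label (φ' w) ∧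
      ∀ w' ∈ t2.V, w' ≠ w → t1.label (φ w') = t1'.label (φ' w')

def PackedConnMinimal (T : TBox) (S : Set ℕ) (C1 C2 : ℕ) (H : TBox) : Prop :=
  IsHypothesis T S C1 C2 H ∧
  ∃ D1 D2 t1 t2 φ, ConnMinimalWit T S C1 C2 H D1 D2 t1 t2 φ ∧
    PackedWit T S C1 t1 t2 φ

/-! ### First-order logic: terms, clauses, semantics -/

/-- Skolem functions: one for each (copy, axiom) pair. -/
abbrev SkFun := Bool × CI

inductive Term : Type where
  | var : ℕ → Term
  | sk0 : Term
  | app : SkFun → Term → Term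
deriving DecidableEq

/-- Ground Skolem terms. -/
inductive GTerm : Type where
  | sk0 : GTerm
  | app : SkFun → GTerm → GTerm
deriving DecidableEq

def GTerm.toTerm : GTerm → Term
  | .sk0 => .sk0
  | .app f t => .app f t.toTerm

def GTerm.depth : GTerm → ℕ
  | .sk0 => 0
  | .app _ t => t.depth + 1

inductive GTerm.Subterm : GTerm → GTerm → Prop
  | refl (t) : GTerm.Subterm t t
  | app {s t} (f) : GTerm.Subterm s t → GTerm.Subterm s (.app f t)

/-- Atoms; unary predicates `(b, A)` where `b = false` marks the original copy of the
atomic concept `A` and `b = true` its duplicate `Ā`. -/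
inductive Atm : Type where
  | conc : (Bool × ℕ) → Term → Atm
  | role : ℕ → Term → Term → Atm
deriving DecidableEq

structure Lit : Type where
  pos : Bool
  atm : Atm
deriving DecidableEq

abbrev Clause := Finset Lit

inductive GAtm : Type where
  | conc : (Bool × ℕ) → GTerm → GAtm
  | role : ℕ → GTerm → GTerm → GAtm
deriving DecidableEq

def GAtm.toAtm : GAtm → Atm
  | .conc P t => .conc P t.toTerm
  | .role r t u => .role r t.toTerm u.toTerm

structure FOInterp (α : Type) where
  c0 : α
  app : SkFun → α → α
  conc : Bool × ℕ → Set α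
  role : ℕ → Set (α × α)

def Term.eval {α : Type} (I : FOInterp α) (ρ : ℕ → α) : Term → α
  | .var x => ρ x
  | .sk0 => I.c0
  | .app f t => I.app f (t.eval I ρ)

def Atm.sat {α : Type} (I : FOInterp α) (ρ : ℕ → α) : Atm → Prop
  | .conc P t => t.eval I ρ ∈ I.conc P
  | .role r t u => (t.eval I ρ, u.eval I ρ) ∈ I.role r

def Lit.sat {α : Type} (I : FOInterp α) (ρ : ℕ → α) (l : Lit) : Prop :=
  if l.pos then l.atm.sat I ρ else ¬ l.atm.sat I ρ

/-- Satisfaction of a clause: the universal closure of the disjunction holds. -/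
def ClauseSat {α : Type} (I : FOInterp α) (c : Clause) : Prop :=
  ∀ ρ : ℕ → α, ∃ l ∈ c, l.sat I ρ

def CModels {α : Type} (I : FOInterp α) (Ψ : Set Clause) : Prop :=
  ∀ c ∈ Ψ, ClauseSat I c

def CEntails (Ψ : Set Clause) (c : Clause) : Prop :=
  ∀ (α : Type) (I : FOInterp α), CModels I Ψ → ClauseSat I c

def ClEntails (c d : Clause) : Prop := CEntails {c} d

def IsPrimeImplicate (Ψ : Set Clause) (c : Clause) : Prop :=
  CEntails Ψ c ∧ ∀ c' : Clause, CEntails Ψ c' → ClEntails c' c → ClEntails c c'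

def Term.vars : Term → Set ℕ
  | .var x => {x}
  | .sk0 => ∅
  | .app _ t => t.vars

def Atm.vars : Atm → Set ℕ
  | .conc _ t => t.vars
  | .role _ t u => t.vars ∪ u.vars

def ClauseVars (c : Clause) : Set ℕ := {x | ∃ l ∈ c, x ∈ l.atm.vars}

def ClauseGround (c : Clause) : Prop := ClauseVars c = ∅
def ClausePositive (c : Clause) : Prop := ∀ l ∈ c, l.pos = true
def ClauseNegative (c : Clause) : Prop := ∀ l ∈ c, l.pos = false

def Atm.inSig (S : Set ℕ) : Atm → Prop
  | .conc P _ => P.2 ∈ S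
  | .role _ _ _ => True

def ClauseInSig (S : Set ℕ) (c : Clause) : Prop := ∀ l ∈ c, l.atm.inSig S

/-- Positive ground prime implicates over `Σ ∪ N_R`. -/
def PIpos (S : Set ℕ) (Ψ : Set Clause) : Set Clause :=
  {c | IsPrimeImplicate Ψ c ∧ ClauseGround c ∧ ClausePositive c ∧ ClauseInSig S c}

/-- Negative ground prime implicates over `Σ ∪ N_R`. -/
def PIneg (S : Set ℕ) (Ψ : Set Clause) : Set Clause :=
  {c | IsPrimeImplicate Ψ c ∧ ClauseGround c ∧ ClauseNegative c ∧ ClauseInSig S c}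

/-- The ground atom `a` belongs (as a unit clause) to `PI^{g+}_Σ(Ψ)`. -/
def InPIpos (S : Set ℕ) (Ψ : Set Clause) (a : GAtm) : Prop :=
  ({⟨true, a.toAtm⟩} : Clause) ∈ PIpos S Ψ

/-! ### Substitutions and resolution -/

def Term.subst (σ : ℕ → Term) : Term → Term
  | .var x => σ x
  | .sk0 => .sk0
  | .app f t => .app f (t.subst σ)

def Atm.subst (σ : ℕ → Term) : Atm → Atm
  | .conc P t => .conc P (t.subst σ)
  | .role r t u => .role r (t.subst σ) (u.subst σ)

def Lit.subst (σ : ℕ → Term) (l : Lit) : Lit := ⟨l.pos, l.atm.subst σ⟩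

def ClauseSubst (σ : ℕ → Term) (c : Clause) : Clause := c.image (Lit.subst σ)

def IsUnifier (σ : ℕ → Term) (a b : Atm) : Prop := a.subst σ = b.subst σ

def IsMGU (σ : ℕ → Term) (a b : Atm) : Prop :=
  IsUnifier σ a b ∧ ∀ τ, IsUnifier τ a b → ∃ δ, ∀ x, (σ x).subst δ = τ x

/-- Resolution derivations from `Ψ`, where every resolvent must satisfy `ok`. -/
inductive Deriv (Ψ : Set Clause) (ok : Clause → Prop) : Clause → Prop
  | hyp {c : Clause} : c ∈ Ψ → Deriv Ψ ok c
  | res {c₁ c₂ : Clause} {a b : Atm} {σ : ℕ → Term} :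
      Deriv Ψ ok c₁ → Deriv Ψ ok c₂ →
      (⟨true, a⟩ : Lit) ∈ c₁ → (⟨false, b⟩ : Lit) ∈ c₂ → IsMGU σ a b →
      ok (ClauseSubst σ (c₁.erase ⟨true, a⟩ ∪ c₂.erase ⟨false, b⟩)) →
      Deriv Ψ ok (ClauseSubst σ (c₁.erase ⟨true, a⟩ ∪ c₂.erase ⟨false, b⟩))
  | factor {c : Clause} {l₁ l₂ : Lit} {σ : ℕ → Term} :
      Deriv Ψ ok c → l₁ ∈ c → l₂ ∈ c → l₁ ≠ l₂ → l₁.pos = l₂.pos →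
      IsMGU σ l₁.atm l₂.atm →
      ok (ClauseSubst σ (c.erase l₂)) →
      Deriv Ψ ok (ClauseSubst σ (c.erase l₂))

/-! ### The translation Φ of an abduction problem -/

def vx : Term := .var 0
def vy : Term := .var 1
def pcl (b : Bool) (A : ℕ) (t : Term) : Lit := ⟨true, .conc (b, A) t⟩
def ncl (b : Bool) (A : ℕ) (t : Term) : Lit := ⟨false, .conc (b, A) t⟩
def prl (r : ℕ) (t u : Term) : Lit := ⟨true, .role r t u⟩
def nrl (r : ℕ) (t u : Term) : Lit := ⟨false, .role r t u⟩

def clausesOf (b : Bool) (ci : CI) : Set Clause :=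
  match ci with
  | (.atom A, .atom B) => {({ncl b A vx, pcl b B vx} : Clause)}
  | (.conj (.atom A₁) (.atom A₂), .atom B) =>
      {({ncl b A₁ vx, ncl b A₂ vx, pcl b B vx} : Clause)}
  | (.ex r (.atom A), .atom B) =>
      {({nrl r vx vy, ncl b A vy, pcl b B vx} : Clause)}
  | (.atom A, .ex r (.atom B)) =>
      {({ncl b A vx, prl r vx (.app (b, (.atom A, .ex r (.atom B))) vx)} : Clause),
       ({ncl b A vx, pcl b B (.app (b, (.atom A, .ex r (.atom B))) vx)} : Clause)}
  | _ => ∅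

/-- The clausal translation `Φ` of the abduction problem `⟨T, Σ, C₁ ⊑ C₂⟩`. -/
def Translation (T : TBox) (C1 C2 : ℕ) : Set Clause :=
  (⋃ ci ∈ T, clausesOf false ci ∪ clausesOf true ci) ∪
  {({pcl false C1 .sk0} : Clause), ({ncl true C2 .sk0} : Clause)}

/-- The presaturation `Φ_p` of a clause set. -/
def presat (Ψ : Set Clause) : Set Clause :=
  Ψ ∪ {c | ∃ (b : Bool) (A B : ℕ),
        c = ({ncl b A vx, pcl b B vx} : Clause) ∧ CEntails Ψ c}

/-! ### Herbrand interpretations -/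

def herb (S : Set GAtm) : FOInterp GTerm where
  c0 := .sk0
  app := .app
  conc := fun P => {t | GAtm.conc P t ∈ S}
  role := fun r => {p | GAtm.role r p.1 p.2 ∈ S}

def HModels (S : Set GAtm) (Ψ : Set Clause) : Prop := CModels (herb S) Ψ

def piPosAtoms (S : Set ℕ) (Ψ : Set Clause) : Set GAtm := {a | InPIpos S Ψ a}

/-- EL semantics of a concept in a Herbrand interpretation (original predicates). -/
def gsem (I : Set GAtm) : ELConcept → Set GTerm
  | .top => Set.univ
  | .atom A => {t | GAtm.conc (false, A) t ∈ I}
  | .conj C D => gsem I C ∩ gsem I D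
  | .ex r C => {t | ∃ u, GAtm.role r t u ∈ I ∧ u ∈ gsem I C}

/-! ### Canonical models of description trees -/

/-- The canonical model `I^c(sl)` of a description tree with Skolem labeling `sl`. -/
def canonModel (t : DescTree) (sl : ℕ → GTerm) : Set GAtm :=
  {a | ∃ e ∈ t.E, a = GAtm.role e.2.1 (sl e.1) (sl e.2.2)} ∪
  {a | ∃ v ∈ t.V, ∃ A ∈ t.label v, a = GAtm.conc (false, A) (sl v)}

/-- The unary-predicate part `I^c_A(sl)` of the canonical model, as labelled pairs. -/
def canonA (t : DescTree) (sl : ℕ → GTerm) : Set (ℕ × GTerm) :=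
  {p | ∃ v ∈ t.V, p.1 ∈ t.label v ∧ p.2 = sl v}

/-- The clause `⋁_{v ∈ V₂, B ∈ l₂(v)} ¬B̄(sl v)`. -/
def negTreeClause (t : DescTree) (sl : ℕ → GTerm) : Clause :=
  t.V.biUnion (fun v =>
    (t.label v).image (fun B => (⟨false, Atm.conc (true, B) (sl v).toTerm⟩ : Lit)))

/-! ### Constructible hypotheses -/

def negClauseOf (B : Finset (ℕ × GTerm)) : Clause :=
  B.image (fun p => (⟨false, Atm.conc (true, p.1) p.2.toTerm⟩ : Lit))

def posUnit (p : ℕ × GTerm) : Clause := {⟨true, Atm.conc (false, p.1) p.2.toTerm⟩}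

/-- `C_{X,t} = ⊓{A | A(t) ∈ X}`. -/
noncomputable def CAt (X : Finset (ℕ × GTerm)) (t : GTerm) : ELConcept :=
  conjOf ((X.filter (fun p => p.2 = t)).image Prod.fst)

/-- `H` is the hypothesis constructed from the sets `A` and `B` of ground atoms. -/
def ConstructibleVia (S : Set ℕ) (Ψ : Set Clause)
    (A B : Finset (ℕ × GTerm)) (H : TBox) : Prop :=
  A.Nonempty ∧ B.Nonempty ∧
  negClauseOf B ∈ PIneg S Ψ ∧
  (∀ p ∈ B, ∃ a, InPIpos S Ψ (GAtm.conc (false, a) p.2)) ∧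
  ((↑A : Set (ℕ × GTerm)) =
    {q | InPIpos S Ψ (GAtm.conc (false, q.1) q.2) ∧ ∃ p ∈ B, p.2 = q.2}) ∧
  ((↑H : Set CI) =
    {ci | ∃ p ∈ B, ci = (CAt A p.2, CAt B p.2) ∧ ¬ PrecSq (CAt B p.2) (CAt A p.2)})

def Constructible (S : Set ℕ) (Ψ : Set Clause) (H : TBox) : Prop :=
  ∃ A B, ConstructibleVia S Ψ A B H

/-! ### Clause shapes I3–I7, signature counts -/

def isI3 (c : Clause) : Prop :=
  ∃ P Q : Bool × ℕ, c = ({⟨false, .conc P vx⟩, ⟨true, .conc Q vx⟩} : Clause)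

def isI4 (c : Clause) : Prop :=
  ∃ P₁ P₂ Q : Bool × ℕ,
    c = ({⟨false, .conc P₁ vx⟩, ⟨false, .conc P₂ vx⟩, ⟨true, .conc Q vx⟩} : Clause)

def isI5 (c : Clause) : Prop :=
  ∃ (r : ℕ) (P Q : Bool × ℕ),
    c = ({⟨false, .role r vx vy⟩, ⟨false, .conc P vy⟩, ⟨true, .conc Q vx⟩} : Clause)

def isI7 (c : Clause) : Prop :=
  ∃ (P Q : Bool × ℕ) (f : SkFun),
    c = ({⟨false, .conc P vx⟩, ⟨true, .conc Q (.app f vx)⟩} : Clause)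

/-- The atomic concept `A_sk` occurring positively in the I7-clause introducing `sk`
(as a predicate, with the copy flag of `sk`). -/
def skHeadPred (f : SkFun) : Bool × ℕ :=
  (f.1, match f.2.2 with
        | .ex _ (.atom B) => B
        | _ => 0)

def Term.funs : Term → Set SkFun
  | .var _ => ∅
  | .sk0 => ∅
  | .app f t => insert f t.funs

def Atm.funs : Atm → Set SkFun
  | .conc _ t => t.funs
  | .role _ t u => t.funs ∪ u.funs

def clauseFuns (c : Clause) : Set SkFun := {f | ∃ l ∈ c, f ∈ l.atm.funs}

def clauseConcs (c : Clause) : Set (Bool × ℕ) := {P | ∃ l ∈ c, ∃ t, l.atm = Atm.conc P t}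

/-- The number of atomic concepts occurring in a clause set. -/
noncomputable def numConcs (Ψ : Set Clause) : ℕ := Set.ncard {P | ∃ c ∈ Ψ, P ∈ clauseConcs c}

/-- The number of occurrences of existential role restrictions in a TBox. -/
def exOccs (T : TBox) : ℕ := T.sum (fun ci => ci.1.exCount + ci.2.exCount)

/-- The number of Skolem functions occurring in `Ψ` introduced for the original copy. -/
noncomputable def numOrigSk (Ψ : Set Clause) : ℕ :=
  Set.ncard {f : SkFun | f.1 = false ∧ ∃ c ∈ Ψ, f ∈ clauseFuns c}

def unitC (P : Bool × ℕ) (t : GTerm) : Clause := {⟨true, .conc P t.toTerm⟩}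
def negUnitC (P : Bool × ℕ) (t : GTerm) : Clause := {⟨false, .conc P t.toTerm⟩}

/-! ### Skolem trees and solution trees -/

structure SkolemTree where
  V : Finset ℕ
  root : ℕ
  E : Finset (ℕ × ℕ)
  s : ℕ → GTerm
  dep : ℕ → ℕ
  root_mem : root ∈ V
  s_root : s root = .sk0
  edge_mem : ∀ e ∈ E, e.1 ∈ V ∧ e.2 ∈ V
  edge_term : ∀ e ∈ E, s e.2 = s e.1 ∨ ∃ f, s e.2 = GTerm.app f (s e.1)
  parent_unique : ∀ e ∈ E, ∀ e' ∈ E, e.2 = e'.2 → e = e'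
  parent_exists : ∀ v ∈ V, v ≠ root → ∃ e ∈ E, e.2 = v
  dep_root : dep root = 0
  dep_edge : ∀ e ∈ E, dep e.2 = dep e.1 + 1

/-- `v` is an ancestor of `w` (every node is an ancestor of itself). -/
def SkolemTree.Ancestor (F : SkolemTree) (v w : ℕ) : Prop :=
  Relation.ReflTransGen (fun a b => (a, b) ∈ F.E) v w

/-- The descendants of `v` (the nodes of the subtree under `v`). -/
def SkolemTree.Desc (F : SkolemTree) (v : ℕ) : Set ℕ := {w | F.Ancestor v w}

/-- The positive labeling `l⁺`. -/
def posLab (Ψ : Set Clause) (F : SkolemTree) (v : ℕ) : Set ℕ :=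
  {A | InPIpos Set.univ Ψ (GAtm.conc (false, A) (F.s v))}

def SkolemTree.children (F : SkolemTree) (v : ℕ) : Finset ℕ :=
  (F.E.filter (fun e => e.1 = v)).image Prod.snd

def SkolemTree.leaves (F : SkolemTree) : Finset ℕ :=
  F.V.filter (fun v => F.E.filter (fun e => e.1 = v) = ∅)

/-- The unit role facts `{r(t, sk(t)) ∈ PI^{g+}}`. -/
def roleFacts (Ψ : Set Clause) : Set Clause :=
  {c | (∃ (r : ℕ) (t : GTerm) (f : SkFun),
        c = ({⟨true, Atm.role r t.toTerm (GTerm.app f t).toTerm⟩} : Clause)) ∧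
       c ∈ PIpos Set.univ Ψ}

def nonGroundOf (Ψ : Set Clause) : Set Clause := {c | c ∈ Ψ ∧ ¬ ClauseGround c}

/-- Negative labeling `l⁻` for a Skolem tree (labels are duplicate concept names,
recorded by their underlying name in `N_C`). -/
def IsNegLabeling (Ψ : Set Clause) (C2 : ℕ) (F : SkolemTree) (ln : ℕ → ℕ) : Prop :=
  ln F.root = C2 ∧
  ∀ v ∈ F.V, F.children v ≠ ∅ →
    Deriv ({negUnitC (true, ln v) (F.s v)} ∪ roleFacts Ψ ∪ nonGroundOf (presat Ψ))
      (fun _ => True)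
      ((F.children v).image
        (fun w => (⟨false, Atm.conc (true, ln w) (F.s w).toTerm⟩ : Lit)))

/-- The clause `φ_{F,l⁻}` determined by the leaves.  (Clauses are finite sets of
literals, so it is automatically considered up to repetition of literals.) -/
def leavesClause (F : SkolemTree) (ln : ℕ → ℕ) : Clause :=
  F.leaves.image (fun v => (⟨false, Atm.conc (true, ln v) (F.s v).toTerm⟩ : Lit))

def IsSolutionTree (Ψ : Set Clause) (C2 : ℕ) (F : SkolemTree) (ln : ℕ → ℕ) : Prop :=
  (∀ v ∈ F.V, (posLab Ψ F v).Nonempty) ∧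
  IsNegLabeling Ψ C2 F ln ∧
  leavesClause F ln ∈ PIneg Set.univ Ψ ∧
  ∃ (A B : Finset (ℕ × GTerm)) (H : TBox),
    ConstructibleVia Set.univ Ψ A B H ∧
    (↑B : Set (ℕ × GTerm)) = {p | ∃ v ∈ F.leaves, p = (ln v, F.s v)}

/-- The solution `{⊓l⁺(v) ⊑ l⁻(v) | v a leaf}` of a solution tree. -/
def treeSol (Ψ : Set Clause) (F : SkolemTree) (ln : ℕ → ℕ) : Set CI :=
  {ci | ∃ v ∈ F.leaves, ∃ s : Finset ℕ, (↑s : Set ℕ) = posLab Ψ F v ∧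
        ci = (conjOf s, ELConcept.atom (ln v))}

/-- Minimality: no solution tree with strictly fewer nodes has a solution
included in the solution of this one. -/
def MinimalSolutionTree (Ψ : Set Clause) (C2 : ℕ) (F : SkolemTree) (ln : ℕ → ℕ) : Prop :=
  IsSolutionTree Ψ C2 F ln ∧
  ∀ (F' : SkolemTree) (ln' : ℕ → ℕ),
    IsSolutionTree Ψ C2 F' ln' →
    treeSol Ψ F' ln' ⊆ treeSol Ψ F ln →
    F.V.card ≤ F'.V.card

/-- Replace the (unique) occurrence of `old` as a suffix of a ground term by `new`. -/
def GTerm.replaceSuffix (old new : GTerm) : GTerm → GTerm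
  | .sk0 => if GTerm.sk0 = old then new else .sk0
  | .app f u => if GTerm.app f u = old then new else .app f (GTerm.replaceSuffix old new u)


/-! ### Auxiliary development for Statement 1 -/

section Statement1Aux

/-! #### Ground terms and atoms -/

theorem aux_subst_toTerm (σ : ℕ → Term) (t : GTerm) : t.toTerm.subst σ = t.toTerm := by
  induction t with
  | sk0 => rfl
  | app f u ih => simp [GTerm.toTerm, Term.subst, ih]

theorem aux_subst_var (t : Term) : t.subst .var = t := by
  induction t <;> simp [Term.subst, *]

theorem aux_vars_toTerm (t : GTerm) : t.toTerm.vars = ∅ := by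
  induction t <;> simp [GTerm.toTerm, Term.vars, *]

theorem aux_toTerm_ne_var (u : GTerm) (n : ℕ) : u.toTerm ≠ .var n := by
  cases u <;> simp [GTerm.toTerm]

theorem aux_atm_subst_toAtm (σ : ℕ → Term) (a : GAtm) : a.toAtm.subst σ = a.toAtm := by
  cases a <;> simp [GAtm.toAtm, Atm.subst, aux_subst_toTerm]

theorem aux_atm_vars_toAtm (a : GAtm) : a.toAtm.vars = ∅ := by
  cases a <;> simp [GAtm.toAtm, Atm.vars, aux_vars_toTerm]

def GLits (c : Clause) : Prop := ∀ l ∈ c, ∃ (p : Bool) (a : GAtm), l = ⟨p, a.toAtm⟩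
def GNeg (c : Clause) : Prop := ∀ l ∈ c, ∃ a : GAtm, l = ⟨false, a.toAtm⟩

theorem GNeg.glits {c : Clause} (h : GNeg c) : GLits c :=
  fun l hl => let ⟨a, ha⟩ := h l hl; ⟨false, a, ha⟩

theorem GNeg.erase {c : Clause} (h : GNeg c) (l : Lit) : GNeg (c.erase l) :=
  fun l' hl' => h l' (Finset.mem_of_mem_erase hl')

theorem aux_clauseVars_glits {c : Clause} (h : GLits c) : ClauseVars c = ∅ := by
  ext x
  simp only [ClauseVars, Set.mem_setOf_eq, Set.mem_empty_iff_false, iff_false]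
  rintro ⟨l, hl, hx⟩
  obtain ⟨p, a, rfl⟩ := h l hl
  rw [aux_atm_vars_toAtm] at hx
  exact hx

theorem aux_ok_glits {c : Clause} (h : GLits c) : (ClauseVars c).Subsingleton := by
  rw [aux_clauseVars_glits h]; exact Set.subsingleton_empty

theorem aux_subsing_of_subset {s : Set ℕ} {x : ℕ} (h : s ⊆ {x}) : s.Subsingleton :=
  fun a ha b hb => by
    have h1 := h ha; have h2 := h hb; simp only [Set.mem_singleton_iff] at h1 h2
    rw [h1, h2]

theorem aux_clauseSubst_union (σ : ℕ → Term) (X Y : Clause) :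
    ClauseSubst σ (X ∪ Y) = ClauseSubst σ X ∪ ClauseSubst σ Y :=
  Finset.image_union _ _

theorem aux_clauseSubst_glits (σ : ℕ → Term) {c : Clause} (h : GLits c) :
    ClauseSubst σ c = c := by
  unfold ClauseSubst
  rw [Finset.image_congr (g := id), Finset.image_id]
  intro l hl
  obtain ⟨p, a, rfl⟩ := h l hl
  simp [Lit.subst, aux_atm_subst_toAtm]

/-! #### MGU constructions -/

def sb1 (t : Term) : ℕ → Term := fun n => if n = 0 then t else .var n
def sb2 (t u : Term) : ℕ → Term := fun n => if n = 0 then t else if n = 1 then u else .var n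

theorem aux_isMGU_symm {σ : ℕ → Term} {a b : Atm} (h : IsMGU σ a b) : IsMGU σ b a :=
  ⟨h.1.symm, fun τ hτ => h.2 τ hτ.symm⟩

theorem aux_isMGU_refl (a : Atm) : IsMGU .var a a :=
  ⟨rfl, fun τ _ => ⟨τ, fun _ => rfl⟩⟩

theorem aux_isMGU_conc_var (P : Bool × ℕ) (t : GTerm) :
    IsMGU (sb1 t.toTerm) (.conc P vx) (.conc P t.toTerm) := by
  constructor
  · simp [IsUnifier, Atm.subst, Term.subst, vx, sb1, aux_subst_toTerm]
  · intro τ hτ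
    simp only [IsUnifier, Atm.subst, Term.subst, vx, aux_subst_toTerm, Atm.conc.injEq,
      true_and] at hτ
    refine ⟨τ, fun x => ?_⟩
    by_cases hx : x = 0
    · subst hx; simp [sb1, aux_subst_toTerm, hτ]
    · simp [sb1, hx, Term.subst]

theorem aux_isMGU_conc_app (P : Bool × ℕ) (f : SkFun) (t : GTerm) :
    IsMGU (sb1 t.toTerm) (.conc P (.app f vx)) (.conc P (.app f t.toTerm)) := by
  constructor
  · simp [IsUnifier, Atm.subst, Term.subst, vx, sb1, aux_subst_toTerm]
  · intro τ hτ
    simp only [IsUnifier, Atm.subst, Term.subst, vx, aux_subst_toTerm, Atm.conc.injEq,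
      Term.app.injEq, true_and] at hτ
    refine ⟨τ, fun x => ?_⟩
    by_cases hx : x = 0
    · subst hx; simp [sb1, aux_subst_toTerm, hτ]
    · simp [sb1, hx, Term.subst]

theorem aux_isMGU_role2 (r : ℕ) (t u : GTerm) :
    IsMGU (sb2 t.toTerm u.toTerm) (.role r vx vy) (.role r t.toTerm u.toTerm) := by
  constructor
  · simp [IsUnifier, Atm.subst, Term.subst, vx, vy, sb2, aux_subst_toTerm]
  · intro τ hτ
    simp only [IsUnifier, Atm.subst, Term.subst, vx, vy, aux_subst_toTerm,
      Atm.role.injEq, true_and] at hτ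
    refine ⟨τ, fun x => ?_⟩
    by_cases hx : x = 0
    · subst hx; simp [sb2, aux_subst_toTerm, hτ.1]
    · by_cases hx1 : x = 1
      · subst hx1; simp [sb2, aux_subst_toTerm, hτ.2]
      · simp [sb2, hx, hx1, Term.subst]

theorem aux_isMGU_role_sk (r : ℕ) (f : SkFun) (t : GTerm) :
    IsMGU (sb2 t.toTerm (.app f t.toTerm)) (.role r vx (.app f vx)) (.role r t.toTerm (.var 1)) := by
  constructor
  · simp [IsUnifier, Atm.subst, Term.subst, vx, vy, sb2, aux_subst_toTerm]
  · intro τ hτ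
    simp only [IsUnifier, Atm.subst, Term.subst, vx, aux_subst_toTerm,
      Atm.role.injEq, true_and] at hτ
    obtain ⟨h0, h1⟩ := hτ
    refine ⟨τ, fun x => ?_⟩
    by_cases hx : x = 0
    · subst hx; simp [sb2, aux_subst_toTerm, h0]
    · by_cases hx1 : x = 1
      · subst hx1; simp [sb2, Term.subst, aux_subst_toTerm, ← h1, h0]
      · simp [sb2, hx, hx1, Term.subst]

end Statement1Aux


section Statement1Aux2

/-! #### Herbrand semantics -/

theorem aux_eval_toTerm (M : Set GAtm) (ρ : ℕ → GTerm) (t : GTerm) :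
    Term.eval (herb M) ρ t.toTerm = t := by
  induction t with
  | sk0 => rfl
  | app f u ih => simp only [GTerm.toTerm, Term.eval, ih]; rfl

theorem aux_sat_toAtm (M : Set GAtm) (ρ : ℕ → GTerm) (a : GAtm) :
    Atm.sat (herb M) ρ a.toAtm ↔ a ∈ M := by
  cases a <;> (simp only [GAtm.toAtm, Atm.sat, aux_eval_toTerm]; exact Iff.rfl)

theorem aux_eval_subst {α : Type} (I : FOInterp α) (ρ : ℕ → α) (σ : ℕ → Term) (t : Term) :
    (t.subst σ).eval I ρ = t.eval I (fun x => (σ x).eval I ρ) := by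
  induction t <;> simp [Term.subst, Term.eval, *]

theorem aux_litsat_subst {α : Type} (I : FOInterp α) (ρ : ℕ → α) (σ : ℕ → Term) (l : Lit) :
    (Lit.subst σ l).sat I ρ ↔ l.sat I (fun x => (σ x).eval I ρ) := by
  obtain ⟨p, a⟩ := l
  cases a <;> cases p <;>
    simp [Lit.subst, Lit.sat, Atm.subst, Atm.sat, aux_eval_subst]

theorem aux_clausesat_subst {α : Type} {I : FOInterp α} {c : Clause}
    (h : ClauseSat I c) (σ : ℕ → Term) : ClauseSat I (ClauseSubst σ c) := by
  intro ρ
  obtain ⟨l, hl, hs⟩ := h (fun x => (σ x).eval I ρ)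
  exact ⟨Lit.subst σ l, Finset.mem_image_of_mem _ hl, (aux_litsat_subst I ρ σ l).2 hs⟩

/-! #### Soundness of resolution -/

theorem aux_deriv_sound {Ψ : Set Clause} {ok : Clause → Prop} {c : Clause}
    (h : Deriv Ψ ok c) : CEntails Ψ c := by
  induction h with
  | hyp hmem => exact fun α I hI => hI _ hmem
  | @res c₁ c₂ a b σ _ _ ha hb hmgu hok ih1 ih2 =>
    intro α I hI ρ
    have S1 := aux_clausesat_subst (ih1 α I hI) σ ρ
    have S2 := aux_clausesat_subst (ih2 α I hI) σ ρ
    by_cases hA : Atm.sat I ρ (a.subst σ)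
    · obtain ⟨l', hl', hs⟩ := S2
      obtain ⟨l₂, hl₂, rfl⟩ := Finset.mem_image.1 hl'
      by_cases he : l₂ = ⟨false, b⟩
      · subst he
        exfalso
        have hss : (Lit.subst σ (⟨false, b⟩ : Lit)).sat I ρ ↔ ¬ Atm.sat I ρ (b.subst σ) := by
          simp [Lit.subst, Lit.sat]
        exact (hss.1 hs) (hmgu.1 ▸ hA)
      · exact ⟨Lit.subst σ l₂,
          Finset.mem_image_of_mem _
            (Finset.mem_union_right _ (Finset.mem_erase.2 ⟨he, hl₂⟩)), hs⟩
    · obtain ⟨l', hl', hs⟩ := S1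
      obtain ⟨l₁, hl₁, rfl⟩ := Finset.mem_image.1 hl'
      by_cases he : l₁ = ⟨true, a⟩
      · subst he
        exfalso
        have hss : (Lit.subst σ (⟨true, a⟩ : Lit)).sat I ρ ↔ Atm.sat I ρ (a.subst σ) := by
          simp [Lit.subst, Lit.sat]
        exact hA (hss.1 hs)
      · exact ⟨Lit.subst σ l₁,
          Finset.mem_image_of_mem _
            (Finset.mem_union_left _ (Finset.mem_erase.2 ⟨he, hl₁⟩)), hs⟩
  | @factor c₀ l₁ l₂ σ _ hl1 hl2 hne hpos hmgu hok ih =>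
    intro α I hI ρ
    obtain ⟨l', hl', hs⟩ := aux_clausesat_subst (ih α I hI) σ ρ
    obtain ⟨l₀, hl₀, rfl⟩ := Finset.mem_image.1 hl'
    by_cases he : l₀ = l₂
    · subst he
      have heq : Lit.subst σ l₀ = Lit.subst σ l₁ := by
        simp only [Lit.subst]
        rw [hpos, hmgu.1]
      refine ⟨Lit.subst σ l₁,
        Finset.mem_image_of_mem _ (Finset.mem_erase.2 ⟨hne, hl1⟩), ?_⟩
      rw [← heq]; exact hs
    · exact ⟨_, Finset.mem_image_of_mem _ (Finset.mem_erase.2 ⟨he, hl₀⟩), hs⟩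

theorem aux_models_presat {α : Type} {I : FOInterp α} {Ψ : Set Clause}
    (h : CModels I Ψ) : CModels I (presat Ψ) := by
  intro c hc
  rcases hc with hc | hc
  · exact h c hc
  · obtain ⟨b, A, B, rfl, hent⟩ := hc
    exact hent α I h

theorem aux_clentails_of_subset {c d : Clause} (h : c ⊆ d) : ClEntails c d :=
  fun α I hI ρ => let ⟨l, hl, hs⟩ := hI c rfl ρ; ⟨l, h hl, hs⟩

/-! #### Membership in the translation -/

theorem aux_mem_trans {T : TBox} {C1 C2 : ℕ} {ci : CI} (hci : ci ∈ T) (b : Bool) {c : Clause}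
    (hc : c ∈ clausesOf b ci) : c ∈ Translation T C1 C2 := by
  apply Set.mem_union_left
  refine Set.mem_biUnion hci ?_
  cases b
  · exact Set.mem_union_left _ hc
  · exact Set.mem_union_right _ hc

theorem aux_c1_mem {T : TBox} {C1 C2 : ℕ} :
    ({pcl false C1 .sk0} : Clause) ∈ Translation T C1 C2 :=
  Set.mem_union_right _ (Set.mem_insert _ _)

theorem aux_c2_mem {T : TBox} {C1 C2 : ℕ} :
    ({ncl true C2 .sk0} : Clause) ∈ Translation T C1 C2 :=
  Set.mem_union_right _ (Set.mem_insert_of_mem _ rfl)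

/-! #### The forward-chaining calculus -/

inductive Reach (T : TBox) (U : Set GAtm) : ℕ → GAtm → Prop
  | unit {a : GAtm} (n : ℕ) : a ∈ U → Reach T U n a
  | i3 {b : Bool} {A B : ℕ} {t : GTerm} {n : ℕ} :
      ((ELConcept.atom A, ELConcept.atom B) : CI) ∈ T →
      Reach T U n (.conc (b, A) t) → Reach T U (n+1) (.conc (b, B) t)
  | i4 {b : Bool} {A₁ A₂ B : ℕ} {t : GTerm} {n : ℕ} :
      ((ELConcept.conj (.atom A₁) (.atom A₂), ELConcept.atom B) : CI) ∈ T →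
      Reach T U n (.conc (b, A₁) t) → Reach T U n (.conc (b, A₂) t) →
      Reach T U (n+1) (.conc (b, B) t)
  | i5 {b : Bool} {r A B : ℕ} {t u : GTerm} {n : ℕ} :
      ((ELConcept.ex r (.atom A), ELConcept.atom B) : CI) ∈ T →
      Reach T U n (.role r t u) → Reach T U n (.conc (b, A) u) →
      Reach T U (n+1) (.conc (b, B) t)
  | i6r {b : Bool} {A r B : ℕ} {t : GTerm} {n : ℕ} :
      ((ELConcept.atom A, ELConcept.ex r (.atom B)) : CI) ∈ T →
      Reach T U n (.conc (b, A) t) →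
      Reach T U (n+1) (.role r t (.app (b, (ELConcept.atom A, ELConcept.ex r (.atom B))) t))
  | i6c {b : Bool} {A r B : ℕ} {t : GTerm} {n : ℕ} :
      ((ELConcept.atom A, ELConcept.ex r (.atom B)) : CI) ∈ T →
      Reach T U n (.conc (b, A) t) →
      Reach T U (n+1) (.conc (b, B) (.app (b, (ELConcept.atom A, ELConcept.ex r (.atom B))) t))

theorem Reach.mono {T : TBox} {U : Set GAtm} {n : ℕ} {a : GAtm}
    (h : Reach T U n a) : ∀ m, n ≤ m → Reach T U m a := by
  induction h with
  | unit n h => exact fun m _ => .unit m h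
  | i3 hci _ ih =>
    intro m hm
    obtain ⟨m', rfl⟩ : ∃ m', m = m' + 1 := ⟨m - 1, by omega⟩
    exact .i3 hci (ih m' (by omega))
  | i4 hci _ _ ih1 ih2 =>
    intro m hm
    obtain ⟨m', rfl⟩ : ∃ m', m = m' + 1 := ⟨m - 1, by omega⟩
    exact .i4 hci (ih1 m' (by omega)) (ih2 m' (by omega))
  | i5 hci _ _ ih1 ih2 =>
    intro m hm
    obtain ⟨m', rfl⟩ : ∃ m', m = m' + 1 := ⟨m - 1, by omega⟩
    exact .i5 hci (ih1 m' (by omega)) (ih2 m' (by omega))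
  | i6r hci _ ih =>
    intro m hm
    obtain ⟨m', rfl⟩ : ∃ m', m = m' + 1 := ⟨m - 1, by omega⟩
    exact .i6r hci (ih m' (by omega))
  | i6c hci _ ih =>
    intro m hm
    obtain ⟨m', rfl⟩ : ∃ m', m = m' + 1 := ⟨m - 1, by omega⟩
    exact .i6c hci (ih m' (by omega))

def RM (T : TBox) (U : Set GAtm) : Set GAtm := {a | ∃ n, Reach T U n a}

end Statement1Aux2


section Statement1Aux3

/-! #### The Reach set is a Herbrand model of the translation -/

theorem aux_rm_sat_clausesOf {T : TBox} (U : Set GAtm) (hNF : NormalForm T)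
    {ci : CI} (hci : ci ∈ T) (b : Bool) {c : Clause} (hc : c ∈ clausesOf b ci) :
    ClauseSat (herb (RM T U)) c := by
  rcases hNF ci hci with ⟨A, B, rfl⟩ | ⟨A₁, A₂, B, rfl⟩ | ⟨r, A, B, rfl⟩ | ⟨A, r, B, rfl⟩
  · simp only [clausesOf, Set.mem_singleton_iff] at hc
    subst hc
    intro ρ
    by_cases h : GAtm.conc (b, A) (ρ 0) ∈ RM T U
    · refine ⟨pcl b B vx, by simp, ?_⟩
      obtain ⟨n, hn⟩ := h
      have : GAtm.conc (b, B) (ρ 0) ∈ RM T U := ⟨n + 1, Reach.i3 hci hn⟩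
      simpa [Lit.sat, pcl, Atm.sat, herb, Term.eval, vx] using this
    · refine ⟨ncl b A vx, by simp, ?_⟩
      simpa [Lit.sat, ncl, Atm.sat, herb, Term.eval, vx] using h
  · simp only [clausesOf, Set.mem_singleton_iff] at hc
    subst hc
    intro ρ
    by_cases h1 : GAtm.conc (b, A₁) (ρ 0) ∈ RM T U
    · by_cases h2 : GAtm.conc (b, A₂) (ρ 0) ∈ RM T U
      · refine ⟨pcl b B vx, by simp, ?_⟩
        obtain ⟨n, hn⟩ := h1
        obtain ⟨m, hm⟩ := h2
        have : GAtm.conc (b, B) (ρ 0) ∈ RM T U :=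
          ⟨max n m + 1, Reach.i4 hci (hn.mono _ (le_max_left _ _)) (hm.mono _ (le_max_right _ _))⟩
        simpa [Lit.sat, pcl, Atm.sat, herb, Term.eval, vx] using this
      · refine ⟨ncl b A₂ vx, by simp, ?_⟩
        simpa [Lit.sat, ncl, Atm.sat, herb, Term.eval, vx] using h2
    · refine ⟨ncl b A₁ vx, by simp, ?_⟩
      simpa [Lit.sat, ncl, Atm.sat, herb, Term.eval, vx] using h1
  · simp only [clausesOf, Set.mem_singleton_iff] at hc
    subst hc
    intro ρ
    by_cases hr : GAtm.role r (ρ 0) (ρ 1) ∈ RM T U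
    · by_cases hA : GAtm.conc (b, A) (ρ 1) ∈ RM T U
      · refine ⟨pcl b B vx, by simp, ?_⟩
        obtain ⟨n, hn⟩ := hr
        obtain ⟨m, hm⟩ := hA
        have : GAtm.conc (b, B) (ρ 0) ∈ RM T U :=
          ⟨max n m + 1, Reach.i5 hci (hn.mono _ (le_max_left _ _)) (hm.mono _ (le_max_right _ _))⟩
        simpa [Lit.sat, pcl, Atm.sat, herb, Term.eval, vx] using this
      · refine ⟨ncl b A vy, by simp, ?_⟩
        simpa [Lit.sat, ncl, Atm.sat, herb, Term.eval, vy] using hA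
    · refine ⟨nrl r vx vy, by simp, ?_⟩
      simpa [Lit.sat, nrl, Atm.sat, herb, Term.eval, vx, vy] using hr
  · simp only [clausesOf, Set.mem_insert_iff, Set.mem_singleton_iff] at hc
    rcases hc with rfl | rfl
    · intro ρ
      by_cases h : GAtm.conc (b, A) (ρ 0) ∈ RM T U
      · refine ⟨prl r vx (.app (b, (ELConcept.atom A, ELConcept.ex r (.atom B))) vx), by simp, ?_⟩
        obtain ⟨n, hn⟩ := h
        have : GAtm.role r (ρ 0)
            (.app (b, (ELConcept.atom A, ELConcept.ex r (.atom B))) (ρ 0)) ∈ RM T U :=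
          ⟨n + 1, Reach.i6r hci hn⟩
        simpa [Lit.sat, prl, Atm.sat, herb, Term.eval, vx] using this
      · refine ⟨ncl b A vx, by simp, ?_⟩
        simpa [Lit.sat, ncl, Atm.sat, herb, Term.eval, vx] using h
    · intro ρ
      by_cases h : GAtm.conc (b, A) (ρ 0) ∈ RM T U
      · refine ⟨pcl b B (.app (b, (ELConcept.atom A, ELConcept.ex r (.atom B))) vx), by simp, ?_⟩
        obtain ⟨n, hn⟩ := h
        have : GAtm.conc (b, B)
            (.app (b, (ELConcept.atom A, ELConcept.ex r (.atom B))) (ρ 0)) ∈ RM T U :=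
          ⟨n + 1, Reach.i6c hci hn⟩
        simpa [Lit.sat, pcl, Atm.sat, herb, Term.eval, vx] using this
      · refine ⟨ncl b A vx, by simp, ?_⟩
        simpa [Lit.sat, ncl, Atm.sat, herb, Term.eval, vx] using h

theorem aux_rm_models {T : TBox} {C1 C2 : ℕ} (hNF : NormalForm T) (U : Set GAtm)
    (hC1 : GAtm.conc (false, C1) GTerm.sk0 ∈ U)
    (hC2 : GAtm.conc (true, C2) GTerm.sk0 ∉ RM T U) :
    CModels (herb (RM T U)) (Translation T C1 C2) := by
  intro c hc
  rcases hc with hc | hc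
  · simp only [Set.mem_iUnion] at hc
    obtain ⟨ci, hci, hc⟩ := hc
    rcases hc with hc | hc
    · exact aux_rm_sat_clausesOf U hNF hci false hc
    · exact aux_rm_sat_clausesOf U hNF hci true hc
  · simp only [Set.mem_insert_iff, Set.mem_singleton_iff] at hc
    rcases hc with rfl | rfl
    · intro ρ
      refine ⟨pcl false C1 .sk0, Finset.mem_singleton_self _, ?_⟩
      have : GAtm.conc (false, C1) GTerm.sk0 ∈ RM T U := ⟨0, .unit 0 hC1⟩
      simpa [Lit.sat, pcl, Atm.sat, herb, Term.eval] using this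
    · intro ρ
      refine ⟨ncl true C2 .sk0, Finset.mem_singleton_self _, ?_⟩
      simpa [Lit.sat, ncl, Atm.sat, herb, Term.eval] using hC2

/-! #### No duplicate concept atoms from the original seed -/

theorem aux_noDup {T : TBox} {C1 : ℕ} {n : ℕ} {a : GAtm}
    (h : Reach T {GAtm.conc (false, C1) GTerm.sk0} n a) :
    ∀ (A : ℕ) (t : GTerm), a ≠ GAtm.conc (true, A) t := by
  induction h with
  | unit n h =>
    intro A t heq
    rw [Set.mem_singleton_iff] at h
    subst h
    simp at heq
  | i3 hci hp ih =>
    rename_i b A₀ B₀ t₀ m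
    intro A t heq
    simp only [GAtm.conc.injEq, Prod.mk.injEq] at heq
    exact ih A₀ t₀ (by rw [heq.1.1])
  | i4 hci hp1 hp2 ih1 ih2 =>
    rename_i b A₁ A₂ B₀ t₀ m
    intro A t heq
    simp only [GAtm.conc.injEq, Prod.mk.injEq] at heq
    exact ih1 A₁ t₀ (by rw [heq.1.1])
  | i5 hci hr hp ihr ih =>
    rename_i b r A₀ B₀ t₀ u₀ m
    intro A t heq
    simp only [GAtm.conc.injEq, Prod.mk.injEq] at heq
    exact ih A₀ u₀ (by rw [heq.1.1])
  | i6r hci hp ih =>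
    intro A t heq
    simp at heq
  | i6c hci hp ih =>
    rename_i b A₀ r B₀ t₀ m
    intro A t heq
    simp only [GAtm.conc.injEq, Prod.mk.injEq] at heq
    exact ih A₀ t₀ (by rw [heq.1.1])

/-! #### Erase computations -/

theorem aux_erase2_1 {x y : Lit} (h : x ≠ y) : ({x, y} : Clause).erase x = {y} :=
  Finset.erase_insert (by simp [h])

theorem aux_erase2_2 {x y : Lit} (h : y ≠ x) : ({x, y} : Clause).erase y = {x} := by
  ext l
  simp only [Finset.mem_erase, Finset.mem_insert, Finset.mem_singleton]
  constructor
  · rintro ⟨hne, rfl | rfl⟩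
    · rfl
    · exact absurd rfl hne
  · rintro rfl
    exact ⟨Ne.symm h, Or.inl rfl⟩

theorem aux_erase3_1 {x y z : Lit} (h1 : x ≠ y) (h2 : x ≠ z) :
    ({x, y, z} : Clause).erase x = {y, z} :=
  Finset.erase_insert (by simp [h1, h2])

theorem aux_erase3_3 {x y z : Lit} (h1 : z ≠ x) (h2 : z ≠ y) :
    ({x, y, z} : Clause).erase z = {x, y} := by
  ext l
  simp only [Finset.mem_erase, Finset.mem_insert, Finset.mem_singleton]
  constructor
  · rintro ⟨hne, rfl | rfl | rfl⟩
    · exact Or.inl rfl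
    · exact Or.inr rfl
    · exact absurd rfl hne
  · rintro (rfl | rfl)
    · exact ⟨Ne.symm h1, Or.inl rfl⟩
    · exact ⟨Ne.symm h2, Or.inr (Or.inl rfl)⟩

theorem aux_deriv_res' {Ψ : Set Clause} {ok : Clause → Prop} {c₁ c₂ d : Clause} {a b : Atm}
    {σ : ℕ → Term}
    (h₁ : Deriv Ψ ok c₁) (h₂ : Deriv Ψ ok c₂)
    (ha : (⟨true, a⟩ : Lit) ∈ c₁) (hb : (⟨false, b⟩ : Lit) ∈ c₂)
    (hmgu : IsMGU σ a b) (hok : ok d)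
    (hd : ClauseSubst σ (c₁.erase ⟨true, a⟩ ∪ c₂.erase ⟨false, b⟩) = d) :
    Deriv Ψ ok d := by
  subst hd
  exact Deriv.res h₁ h₂ ha hb hmgu hok

end Statement1Aux3


section Statement1Aux4

theorem aux_glits_empty : GLits (∅ : Clause) := fun l hl => absurd hl (Finset.notMem_empty l)

theorem aux_glits_insert {c : Clause} (h : GLits c) (p : Bool) (a : GAtm) :
    GLits (insert (⟨p, a.toAtm⟩ : Lit) c) := by
  intro l hl
  rcases Finset.mem_insert.1 hl with rfl | hl
  · exact ⟨p, a, rfl⟩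
  · exact h l hl

theorem aux_glits_single (p : Bool) (a : GAtm) : GLits ({⟨p, a.toAtm⟩} : Clause) :=
  aux_glits_insert aux_glits_empty p a

theorem aux_gneg_insert {c : Clause} (h : GNeg c) (a : GAtm) :
    GNeg (insert (⟨false, a.toAtm⟩ : Lit) c) := by
  intro l hl
  rcases Finset.mem_insert.1 hl with rfl | hl
  · exact ⟨a, rfl⟩
  · exact h l hl

/-! #### Derivation of positive ground units -/

theorem aux_derivPos {T : TBox} {C1 C2 : ℕ} {n : ℕ} {a : GAtm}
    (h : Reach T {GAtm.conc (false, C1) GTerm.sk0} n a) :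
    Deriv (presat (Translation T C1 C2)) (fun c => (ClauseVars c).Subsingleton)
      ({⟨true, a.toAtm⟩} : Clause) := by
  induction h with
  | unit n h =>
    rw [Set.mem_singleton_iff] at h
    subst h
    exact Deriv.hyp (Set.mem_union_left _ aux_c1_mem)
  | i3 hci hp ih =>
    rename_i b A₀ B₀ t₀ m
    have hclm : ({⟨false, Atm.conc (b, A₀) vx⟩, ⟨true, Atm.conc (b, B₀) vx⟩} : Clause)
        ∈ presat (Translation T C1 C2) :=
      Set.mem_union_left _ (aux_mem_trans hci b (by simp [clausesOf, ncl, pcl]))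
    refine aux_deriv_res' ih (Deriv.hyp hclm)
      (Finset.mem_singleton_self _) (Finset.mem_insert_self _ _)
      (aux_isMGU_symm (aux_isMGU_conc_var (b, A₀) t₀))
      (aux_ok_glits (aux_glits_single true (GAtm.conc (b, B₀) t₀))) ?_
    simp only [GAtm.toAtm]
    rw [Finset.erase_singleton, Finset.empty_union, aux_erase2_1 (by simp)]
    simp [ClauseSubst, Lit.subst, Atm.subst, Term.subst, sb1, vx]
  | i4 hci hp1 hp2 ih1 ih2 =>
    rename_i b A₁ A₂ B₀ t₀ m
    have hclm : ({⟨false, Atm.conc (b, A₁) vx⟩, ⟨false, Atm.conc (b, A₂) vx⟩,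
        ⟨true, Atm.conc (b, B₀) vx⟩} : Clause) ∈ presat (Translation T C1 C2) :=
      Set.mem_union_left _ (aux_mem_trans hci b (by simp [clausesOf, ncl, pcl]))
    by_cases hAA : A₁ = A₂
    · subst hAA
      refine aux_deriv_res' ih1 (Deriv.hyp hclm)
        (Finset.mem_singleton_self _) (Finset.mem_insert_self _ _)
        (aux_isMGU_symm (aux_isMGU_conc_var (b, A₁) t₀))
        (aux_ok_glits (aux_glits_single true (GAtm.conc (b, B₀) t₀))) ?_
      simp only [GAtm.toAtm]
      rw [Finset.erase_singleton, Finset.empty_union, Finset.insert_idem,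
        aux_erase2_1 (by simp)]
      simp [ClauseSubst, Lit.subst, Atm.subst, Term.subst, sb1, vx]
    · have hR1 : Deriv (presat (Translation T C1 C2)) (fun c => (ClauseVars c).Subsingleton)
          ({⟨false, Atm.conc (b, A₂) t₀.toTerm⟩, ⟨true, Atm.conc (b, B₀) t₀.toTerm⟩} : Clause) := by
        refine aux_deriv_res' ih1 (Deriv.hyp hclm)
          (Finset.mem_singleton_self _) (Finset.mem_insert_self _ _)
          (aux_isMGU_symm (aux_isMGU_conc_var (b, A₁) t₀))
          (aux_ok_glits (aux_glits_insert
            (aux_glits_single true (GAtm.conc (b, B₀) t₀)) false (GAtm.conc (b, A₂) t₀))) ?_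
        simp only [GAtm.toAtm]
        rw [Finset.erase_singleton, Finset.empty_union,
          aux_erase3_1 (by simp [hAA]) (by simp)]
        simp [ClauseSubst, Lit.subst, Atm.subst, Term.subst, sb1, vx]
      refine aux_deriv_res' ih2 hR1
        (Finset.mem_singleton_self _) (Finset.mem_insert_self _ _)
        (aux_isMGU_refl _)
        (aux_ok_glits (aux_glits_single true (GAtm.conc (b, B₀) t₀))) ?_
      simp only [GAtm.toAtm]
      rw [Finset.erase_singleton, Finset.empty_union, aux_erase2_1 (by simp)]
      simp [ClauseSubst, Lit.subst, Atm.subst, aux_subst_toTerm]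
  | i5 hci hr hp ihr ih =>
    rename_i b r A₀ B₀ t₀ u₀ m
    have hclm : ({⟨false, Atm.role r vx vy⟩, ⟨false, Atm.conc (b, A₀) vy⟩,
        ⟨true, Atm.conc (b, B₀) vx⟩} : Clause) ∈ presat (Translation T C1 C2) :=
      Set.mem_union_left _ (aux_mem_trans hci b (by simp [clausesOf, nrl, ncl, pcl]))
    have hR1 : Deriv (presat (Translation T C1 C2)) (fun c => (ClauseVars c).Subsingleton)
        ({⟨false, Atm.conc (b, A₀) u₀.toTerm⟩, ⟨true, Atm.conc (b, B₀) t₀.toTerm⟩} : Clause) := by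
      refine aux_deriv_res' ihr (Deriv.hyp hclm)
        (Finset.mem_singleton_self _) (Finset.mem_insert_self _ _)
        (aux_isMGU_symm (aux_isMGU_role2 r t₀ u₀))
        (aux_ok_glits (aux_glits_insert
          (aux_glits_single true (GAtm.conc (b, B₀) t₀)) false (GAtm.conc (b, A₀) u₀))) ?_
      simp only [GAtm.toAtm]
      rw [Finset.erase_singleton, Finset.empty_union,
        aux_erase3_1 (by simp) (by simp)]
      simp [ClauseSubst, Lit.subst, Atm.subst, Term.subst, sb2, vx, vy]
    refine aux_deriv_res' ih hR1
      (Finset.mem_singleton_self _) (Finset.mem_insert_self _ _)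
      (aux_isMGU_refl _)
      (aux_ok_glits (aux_glits_single true (GAtm.conc (b, B₀) t₀))) ?_
    simp only [GAtm.toAtm]
    rw [Finset.erase_singleton, Finset.empty_union, aux_erase2_1 (by simp)]
    simp [ClauseSubst, Lit.subst, Atm.subst, aux_subst_toTerm]
  | i6r hci hp ih =>
    rename_i b A₀ r B₀ t₀ m
    have hclm : ({⟨false, Atm.conc (b, A₀) vx⟩,
        ⟨true, Atm.role r vx (.app (b, (ELConcept.atom A₀, ELConcept.ex r (.atom B₀))) vx)⟩} : Clause)
        ∈ presat (Translation T C1 C2) :=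
      Set.mem_union_left _ (aux_mem_trans hci b (by simp [clausesOf, ncl, prl]))
    refine aux_deriv_res' ih (Deriv.hyp hclm)
      (Finset.mem_singleton_self _)
      (Finset.mem_insert_self _ _)
      (aux_isMGU_symm (aux_isMGU_conc_var (b, A₀) t₀))
      (aux_ok_glits (aux_glits_single true
        (GAtm.role r t₀ (.app (b, (ELConcept.atom A₀, ELConcept.ex r (.atom B₀))) t₀)))) ?_
    simp only [GAtm.toAtm, GTerm.toTerm]
    rw [Finset.erase_singleton, Finset.empty_union, aux_erase2_1 (by simp)]
    simp [ClauseSubst, Lit.subst, Atm.subst, Term.subst, sb1, vx]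
  | i6c hci hp ih =>
    rename_i b A₀ r B₀ t₀ m
    have hclm : ({⟨false, Atm.conc (b, A₀) vx⟩,
        ⟨true, Atm.conc (b, B₀) (.app (b, (ELConcept.atom A₀, ELConcept.ex r (.atom B₀))) vx)⟩} : Clause)
        ∈ presat (Translation T C1 C2) :=
      Set.mem_union_left _ (aux_mem_trans hci b (by simp [clausesOf, ncl, pcl]))
    refine aux_deriv_res' ih (Deriv.hyp hclm)
      (Finset.mem_singleton_self _)
      (Finset.mem_insert_self _ _)
      (aux_isMGU_symm (aux_isMGU_conc_var (b, A₀) t₀))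
      (aux_ok_glits (aux_glits_single true
        (GAtm.conc (b, B₀) (.app (b, (ELConcept.atom A₀, ELConcept.ex r (.atom B₀))) t₀)))) ?_
    simp only [GAtm.toAtm, GTerm.toTerm]
    rw [Finset.erase_singleton, Finset.empty_union, aux_erase2_1 (by simp)]
    simp [ClauseSubst, Lit.subst, Atm.subst, Term.subst, sb1, vx]

end Statement1Aux4


section Statement1Aux5

theorem aux_rolevar_not_gneg {c : Clause} (h : GNeg c) (r : ℕ) (t : Term) (k : ℕ) :
    (⟨false, Atm.role r t (.var k)⟩ : Lit) ∉ c := by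
  intro hm
  obtain ⟨a, ha⟩ := h _ hm
  cases a with
  | conc P u => simp [GAtm.toAtm] at ha
  | role r' u v =>
    simp only [GAtm.toAtm, Lit.mk.injEq, Atm.role.injEq, true_and] at ha
    exact aux_toTerm_ne_var v k ha.2.2.symm

theorem aux_chain {c' D Lv : Clause} {l : Lit} (h : c' ⊆ (insert l D).erase l ∪ Lv) :
    c' ⊆ D ∪ Lv := by
  intro x hx
  rcases Finset.mem_union.1 (h hx) with hx' | hx'
  · obtain ⟨hne, hxm⟩ := Finset.mem_erase.1 hx'
    rcases Finset.mem_insert.1 hxm with rfl | hxm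
    · exact absurd rfl hne
    · exact Finset.mem_union_left _ hxm
  · exact Finset.mem_union_right _ hx'

/-! #### Backward derivation of negative ground clauses -/

theorem aux_derivNeg {T : TBox} {C1 C2 : ℕ}
    (U : Set GAtm) (Lv : Clause)
    (hU : ∀ a ∈ U, (⟨false, a.toAtm⟩ : Lit) ∈ Lv ∨ a = GAtm.conc (false, C1) GTerm.sk0)
    (hLv : ∀ l ∈ Lv, ∃ (P : Bool × ℕ) (t : GTerm), l = ⟨false, Atm.conc P t.toTerm⟩) :
    ∀ (n : ℕ) (P : Bool × ℕ) (s : GTerm), Reach T U n (GAtm.conc P s) →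
    ∀ c : Clause,
      Deriv (presat (Translation T C1 C2)) (fun c => (ClauseVars c).Subsingleton) c →
      GNeg c → (⟨false, Atm.conc P s.toTerm⟩ : Lit) ∈ c →
    ∃ c', Deriv (presat (Translation T C1 C2)) (fun c => (ClauseVars c).Subsingleton) c' ∧
      GNeg c' ∧ c' ⊆ (c.erase ⟨false, Atm.conc P s.toTerm⟩) ∪ Lv := by
  intro n
  induction n using Nat.strong_induction_on with
  | _ n IH =>
  intro P s h c hc hgn hmem
  cases h with
  | unit _ ha =>
    rcases hU _ ha with hin | heq
    · refine ⟨c, hc, hgn, ?_⟩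
      intro l hl
      by_cases hel : l = ⟨false, Atm.conc P s.toTerm⟩
      · subst hel
        exact Finset.mem_union_right _ hin
      · exact Finset.mem_union_left _ (Finset.mem_erase.2 ⟨hel, hl⟩)
    · simp only [GAtm.conc.injEq] at heq
      obtain ⟨rfl, rfl⟩ := heq
      refine ⟨c.erase ⟨false, Atm.conc (false, C1) GTerm.sk0.toTerm⟩,
        ?_, hgn.erase _, Finset.subset_union_left⟩
      refine aux_deriv_res' (Deriv.hyp (Set.mem_union_left _ aux_c1_mem)) hc
        (Finset.mem_singleton_self _) hmem (aux_isMGU_refl _)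
        (aux_ok_glits ((hgn.erase _).glits)) ?_
      simp only [pcl]
      rw [Finset.erase_singleton, Finset.empty_union]
      exact aux_clauseSubst_glits _ ((hgn.erase _).glits)
  | i3 hci hp =>
    rename_i b A₀ B₀ m
    have hgn' := hgn.erase (⟨false, Atm.conc (b, B₀) s.toTerm⟩ : Lit)
    have hclm : ({⟨false, Atm.conc (b, A₀) vx⟩, ⟨true, Atm.conc (b, B₀) vx⟩} : Clause)
        ∈ presat (Translation T C1 C2) :=
      Set.mem_union_left _ (aux_mem_trans hci b (by simp [clausesOf, ncl, pcl]))
    have hR : Deriv (presat (Translation T C1 C2)) (fun c => (ClauseVars c).Subsingleton)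
        (insert (⟨false, Atm.conc (b, A₀) s.toTerm⟩ : Lit)
          (c.erase ⟨false, Atm.conc (b, B₀) s.toTerm⟩)) := by
      refine aux_deriv_res' (Deriv.hyp hclm) hc
        (Finset.mem_insert_of_mem (Finset.mem_singleton_self _)) hmem
        (aux_isMGU_conc_var (b, B₀) s)
        (aux_ok_glits ((aux_gneg_insert (hgn.erase _) (GAtm.conc (b, A₀) s)).glits)) ?_
      rw [aux_erase2_2 (by simp), aux_clauseSubst_union,
        aux_clauseSubst_glits _ hgn'.glits]
      have e3 : ClauseSubst (sb1 s.toTerm) ({⟨false, Atm.conc (b, A₀) vx⟩} : Clause)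
          = {⟨false, Atm.conc (b, A₀) s.toTerm⟩} := by
        simp [ClauseSubst, Lit.subst, Atm.subst, Term.subst, sb1, vx]
      rw [e3, ← Finset.insert_eq]
    obtain ⟨c', hd', hgn'', hsub⟩ :=
      IH m (by omega) (b, A₀) s hp _ hR
        (aux_gneg_insert (hgn.erase _) (GAtm.conc (b, A₀) s))
        (Finset.mem_insert_self _ _)
    exact ⟨c', hd', hgn'', aux_chain hsub⟩
  | i4 hci hp1 hp2 =>
    rename_i b A₁ A₂ B₀ m
    have hgn' := hgn.erase (⟨false, Atm.conc (b, B₀) s.toTerm⟩ : Lit)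
    have hclm : ({⟨false, Atm.conc (b, A₁) vx⟩, ⟨false, Atm.conc (b, A₂) vx⟩,
        ⟨true, Atm.conc (b, B₀) vx⟩} : Clause) ∈ presat (Translation T C1 C2) :=
      Set.mem_union_left _ (aux_mem_trans hci b (by simp [clausesOf, ncl, pcl]))
    have hR : Deriv (presat (Translation T C1 C2)) (fun c => (ClauseVars c).Subsingleton)
        (insert (⟨false, Atm.conc (b, A₁) s.toTerm⟩ : Lit)
          (insert (⟨false, Atm.conc (b, A₂) s.toTerm⟩ : Lit)
            (c.erase ⟨false, Atm.conc (b, B₀) s.toTerm⟩))) := by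
      refine aux_deriv_res' (Deriv.hyp hclm) hc
        (Finset.mem_insert_of_mem (Finset.mem_insert_of_mem (Finset.mem_singleton_self _)))
        hmem (aux_isMGU_conc_var (b, B₀) s)
        (aux_ok_glits ((aux_gneg_insert (aux_gneg_insert (hgn.erase _)
          (GAtm.conc (b, A₂) s)) (GAtm.conc (b, A₁) s)).glits)) ?_
      rw [aux_erase3_3 (by simp) (by simp), aux_clauseSubst_union,
        aux_clauseSubst_glits _ hgn'.glits]
      have e3 : ClauseSubst (sb1 s.toTerm)
          ({⟨false, Atm.conc (b, A₁) vx⟩, ⟨false, Atm.conc (b, A₂) vx⟩} : Clause)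
          = {⟨false, Atm.conc (b, A₁) s.toTerm⟩, ⟨false, Atm.conc (b, A₂) s.toTerm⟩} := by
        simp [ClauseSubst, Finset.image_insert, Lit.subst, Atm.subst, Term.subst, sb1, vx]
      rw [e3, Finset.insert_union, ← Finset.insert_eq]
    obtain ⟨c₁', hD1, hG1, hS1⟩ :=
      IH m (by omega) (b, A₁) s hp1 _ hR
        (aux_gneg_insert (aux_gneg_insert (hgn.erase _) (GAtm.conc (b, A₂) s))
          (GAtm.conc (b, A₁) s))
        (Finset.mem_insert_self _ _)
    have hS1' : c₁' ⊆ insert (⟨false, Atm.conc (b, A₂) s.toTerm⟩ : Lit)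
        (c.erase ⟨false, Atm.conc (b, B₀) s.toTerm⟩) ∪ Lv := aux_chain hS1
    by_cases hm2 : (⟨false, Atm.conc (b, A₂) s.toTerm⟩ : Lit) ∈ c₁'
    · obtain ⟨c₂', hD2, hG2, hS2⟩ := IH m (by omega) (b, A₂) s hp2 _ hD1 hG1 hm2
      refine ⟨c₂', hD2, hG2, ?_⟩
      intro x hx
      rcases Finset.mem_union.1 (hS2 hx) with hx' | hx'
      · obtain ⟨hne, hxc⟩ := Finset.mem_erase.1 hx'
        rcases Finset.mem_union.1 (hS1' hxc) with hx'' | hx''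
        · rcases Finset.mem_insert.1 hx'' with rfl | hx''
          · exact absurd rfl hne
          · exact Finset.mem_union_left _ hx''
        · exact Finset.mem_union_right _ hx''
      · exact Finset.mem_union_right _ hx'
    · refine ⟨c₁', hD1, hG1, ?_⟩
      intro x hx
      rcases Finset.mem_union.1 (hS1' hx) with hx'' | hx''
      · rcases Finset.mem_insert.1 hx'' with rfl | hx''
        · exact absurd hx hm2
        · exact Finset.mem_union_left _ hx''
      · exact Finset.mem_union_right _ hx''
  | i5 hci hrole hp =>
    rename_i b r A₀ B₀ u₀ m
    cases hrole with
    | unit _ ha' =>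
      exfalso
      rcases hU _ ha' with hin | heq
      · obtain ⟨P', t', hEq⟩ := hLv _ hin
        simp [GAtm.toAtm] at hEq
      · simp at heq
    | i6r hci' hp' =>
      rename_i b' A' B'' m'
      have hgn' := hgn.erase (⟨false, Atm.conc (b, B₀) s.toTerm⟩ : Lit)
      have hclm5 : ({⟨false, Atm.role r vx vy⟩, ⟨false, Atm.conc (b, A₀) vy⟩,
          ⟨true, Atm.conc (b, B₀) vx⟩} : Clause) ∈ presat (Translation T C1 C2) :=
        Set.mem_union_left _ (aux_mem_trans hci b (by simp [clausesOf, nrl, ncl, pcl]))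
      have hclm6 : ({⟨false, Atm.conc (b', A') vx⟩,
          ⟨true, Atm.role r vx
            (.app (b', (ELConcept.atom A', ELConcept.ex r (.atom B''))) vx)⟩} : Clause)
          ∈ presat (Translation T C1 C2) :=
        Set.mem_union_left _ (aux_mem_trans hci' b' (by simp [clausesOf, ncl, prl]))
      have hR1 : Deriv (presat (Translation T C1 C2)) (fun c => (ClauseVars c).Subsingleton)
          (insert (⟨false, Atm.role r s.toTerm (.var 1)⟩ : Lit)
            (insert (⟨false, Atm.conc (b, A₀) (.var 1)⟩ : Lit)
              (c.erase ⟨false, Atm.conc (b, B₀) s.toTerm⟩))) := by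
        refine aux_deriv_res' (Deriv.hyp hclm5) hc
          (Finset.mem_insert_of_mem (Finset.mem_insert_of_mem (Finset.mem_singleton_self _)))
          hmem (aux_isMGU_conc_var (b, B₀) s) ?_ ?_
        · refine aux_subsing_of_subset (x := 1) ?_
          rintro x ⟨l, hl, hxv⟩
          rcases Finset.mem_insert.1 hl with rfl | hl
          · simp only [Atm.vars, Term.vars, aux_vars_toTerm, Set.empty_union,
              Set.mem_singleton_iff] at hxv
            simp [hxv]
          · rcases Finset.mem_insert.1 hl with rfl | hl
            · simp only [Atm.vars, Term.vars, Set.mem_singleton_iff] at hxv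
              simp [hxv]
            · obtain ⟨a', rfl⟩ := hgn' l hl
              rw [aux_atm_vars_toAtm] at hxv
              exact absurd hxv (Set.notMem_empty x)
        · rw [aux_erase3_3 (by simp) (by simp), aux_clauseSubst_union,
            aux_clauseSubst_glits _ hgn'.glits]
          have e3 : ClauseSubst (sb1 s.toTerm)
              ({⟨false, Atm.role r vx vy⟩, ⟨false, Atm.conc (b, A₀) vy⟩} : Clause)
              = {⟨false, Atm.role r s.toTerm (.var 1)⟩,
                 ⟨false, Atm.conc (b, A₀) (.var 1)⟩} := by
            simp [ClauseSubst, Finset.image_insert, Lit.subst, Atm.subst, Term.subst, sb1, vx, vy]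
          rw [e3, Finset.insert_union, ← Finset.insert_eq]
      have hR2 : Deriv (presat (Translation T C1 C2)) (fun c => (ClauseVars c).Subsingleton)
          (insert (⟨false, Atm.conc (b', A') s.toTerm⟩ : Lit)
            (insert (⟨false, Atm.conc (b, A₀)
                (.app (b', (ELConcept.atom A', ELConcept.ex r (.atom B''))) s.toTerm)⟩ : Lit)
              (c.erase ⟨false, Atm.conc (b, B₀) s.toTerm⟩))) := by
        refine aux_deriv_res' (Deriv.hyp hclm6) hR1
          (Finset.mem_insert_of_mem (Finset.mem_singleton_self _))
          (Finset.mem_insert_self _ _)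
          (aux_isMGU_role_sk r (b', (ELConcept.atom A', ELConcept.ex r (.atom B''))) s)
          (aux_ok_glits ((aux_gneg_insert (aux_gneg_insert (hgn.erase _)
            (GAtm.conc (b, A₀)
              (.app (b', (ELConcept.atom A', ELConcept.ex r (.atom B''))) s)))
            (GAtm.conc (b', A') s)).glits)) ?_
        have hnm : (⟨false, Atm.role r s.toTerm (.var 1)⟩ : Lit) ∉
            insert (⟨false, Atm.conc (b, A₀) (.var 1)⟩ : Lit)
              (c.erase ⟨false, Atm.conc (b, B₀) s.toTerm⟩) := by
          intro hmm
          rcases Finset.mem_insert.1 hmm with heq | hmm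
          · simp at heq
          · exact aux_rolevar_not_gneg (hgn.erase _) r s.toTerm 1 hmm
        rw [aux_erase2_2 (by simp), Finset.erase_insert hnm, aux_clauseSubst_union]
        have e4 : ClauseSubst (sb2 s.toTerm
            (.app (b', (ELConcept.atom A', ELConcept.ex r (.atom B''))) s.toTerm))
            ({⟨false, Atm.conc (b', A') vx⟩} : Clause)
            = {⟨false, Atm.conc (b', A') s.toTerm⟩} := by
          simp [ClauseSubst, Lit.subst, Atm.subst, Term.subst, sb2, vx]
        have e5 : ClauseSubst (sb2 s.toTerm
            (.app (b', (ELConcept.atom A', ELConcept.ex r (.atom B''))) s.toTerm))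
            (insert (⟨false, Atm.conc (b, A₀) (.var 1)⟩ : Lit)
              (c.erase ⟨false, Atm.conc (b, B₀) s.toTerm⟩))
            = insert (⟨false, Atm.conc (b, A₀)
                (.app (b', (ELConcept.atom A', ELConcept.ex r (.atom B''))) s.toTerm)⟩ : Lit)
              (c.erase ⟨false, Atm.conc (b, B₀) s.toTerm⟩) := by
          unfold ClauseSubst
          rw [Finset.image_insert,
            show Finset.image (Lit.subst (sb2 s.toTerm
              (.app (b', (ELConcept.atom A', ELConcept.ex r (.atom B''))) s.toTerm)))
              (c.erase ⟨false, Atm.conc (b, B₀) s.toTerm⟩)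
              = c.erase ⟨false, Atm.conc (b, B₀) s.toTerm⟩
              from aux_clauseSubst_glits _ hgn'.glits]
          simp [Lit.subst, Atm.subst, Term.subst, sb2]
        rw [e4, e5, ← Finset.insert_eq]
      obtain ⟨c₁', hD1, hG1, hS1⟩ :=
        IH m' (by omega) (b', A') s hp' _ hR2
          (aux_gneg_insert (aux_gneg_insert (hgn.erase _)
            (GAtm.conc (b, A₀)
              (.app (b', (ELConcept.atom A', ELConcept.ex r (.atom B''))) s)))
            (GAtm.conc (b', A') s))
          (Finset.mem_insert_self _ _)
      have hS1' : c₁' ⊆ insert (⟨false, Atm.conc (b, A₀)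
          (.app (b', (ELConcept.atom A', ELConcept.ex r (.atom B''))) s.toTerm)⟩ : Lit)
          (c.erase ⟨false, Atm.conc (b, B₀) s.toTerm⟩) ∪ Lv := aux_chain hS1
      by_cases hm2 : (⟨false, Atm.conc (b, A₀)
          (.app (b', (ELConcept.atom A', ELConcept.ex r (.atom B''))) s.toTerm)⟩ : Lit) ∈ c₁'
      · obtain ⟨c₂', hD2, hG2, hS2⟩ :=
          IH (m' + 1) (by omega) (b, A₀)
            (GTerm.app (b', (ELConcept.atom A', ELConcept.ex r (.atom B''))) s) hp _ hD1 hG1 hm2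
        refine ⟨c₂', hD2, hG2, ?_⟩
        intro x hx
        rcases Finset.mem_union.1 (hS2 hx) with hx' | hx'
        · obtain ⟨hne, hxc⟩ := Finset.mem_erase.1 hx'
          rcases Finset.mem_union.1 (hS1' hxc) with hx'' | hx''
          · rcases Finset.mem_insert.1 hx'' with rfl | hx''
            · exact absurd rfl hne
            · exact Finset.mem_union_left _ hx''
          · exact Finset.mem_union_right _ hx''
        · exact Finset.mem_union_right _ hx'
      · refine ⟨c₁', hD1, hG1, ?_⟩
        intro x hx
        rcases Finset.mem_union.1 (hS1' hx) with hx'' | hx''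
        · rcases Finset.mem_insert.1 hx'' with rfl | hx''
          · exact absurd hx hm2
          · exact Finset.mem_union_left _ hx''
        · exact Finset.mem_union_right _ hx''
  | i6c hci hp =>
    rename_i b A₀ r B₀ t₀ m
    have hgn' := hgn.erase (⟨false, Atm.conc (b, B₀)
      (GTerm.app (b, (ELConcept.atom A₀, ELConcept.ex r (.atom B₀))) t₀).toTerm⟩ : Lit)
    have hclm : ({⟨false, Atm.conc (b, A₀) vx⟩,
        ⟨true, Atm.conc (b, B₀)
          (.app (b, (ELConcept.atom A₀, ELConcept.ex r (.atom B₀))) vx)⟩} : Clause)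
        ∈ presat (Translation T C1 C2) :=
      Set.mem_union_left _ (aux_mem_trans hci b (by simp [clausesOf, ncl, pcl]))
    have hR : Deriv (presat (Translation T C1 C2)) (fun c => (ClauseVars c).Subsingleton)
        (insert (⟨false, Atm.conc (b, A₀) t₀.toTerm⟩ : Lit)
          (c.erase ⟨false, Atm.conc (b, B₀)
            (GTerm.app (b, (ELConcept.atom A₀, ELConcept.ex r (.atom B₀))) t₀).toTerm⟩)) := by
      refine aux_deriv_res' (Deriv.hyp hclm) hc
        (Finset.mem_insert_of_mem (Finset.mem_singleton_self _)) hmem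
        (aux_isMGU_conc_app (b, B₀) (b, (ELConcept.atom A₀, ELConcept.ex r (.atom B₀))) t₀)
        (aux_ok_glits ((aux_gneg_insert (hgn.erase _) (GAtm.conc (b, A₀) t₀)).glits)) ?_
      rw [aux_erase2_2 (by simp), aux_clauseSubst_union,
        aux_clauseSubst_glits _ hgn'.glits]
      have e3 : ClauseSubst (sb1 t₀.toTerm) ({⟨false, Atm.conc (b, A₀) vx⟩} : Clause)
          = {⟨false, Atm.conc (b, A₀) t₀.toTerm⟩} := by
        simp [ClauseSubst, Lit.subst, Atm.subst, Term.subst, sb1, vx]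
      rw [e3, ← Finset.insert_eq]
    obtain ⟨c', hd', hgn'', hsub⟩ :=
      IH m (by omega) (b, A₀) t₀ hp _ hR
        (aux_gneg_insert (hgn.erase _) (GAtm.conc (b, A₀) t₀))
        (Finset.mem_insert_self _ _)
    exact ⟨c', hd', hgn'', aux_chain hsub⟩

end Statement1Aux5



/-- every constructible hypothesis can be built from prime implicates
each of which has a resolution derivation from `Φ_p` in which every resolvent
contains at most one variable. -/
theorem constructible_from_one_variable_derivations
    (T : TBox) (S : Set ℕ) (C1 C2 : ℕ)
    (hNF : NormalForm T)
    (hno : ¬ Entails T (.atom C1) (.atom C2))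
    (H : TBox)
    (hH : Constructible S (Translation T C1 C2) H) :
    ∃ A B : Finset (ℕ × GTerm),
      ConstructibleVia S (Translation T C1 C2) A B H ∧
      Deriv (presat (Translation T C1 C2))
        (fun c => (ClauseVars c).Subsingleton) (negClauseOf B) ∧
      ∀ p ∈ A,
        Deriv (presat (Translation T C1 C2))
          (fun c => (ClauseVars c).Subsingleton) (posUnit p) := by
  obtain ⟨A, B, hvia⟩ := hH
  obtain ⟨hAne, hBne, hBpi, hBex, hAset, hHset⟩ := hvia
  refine ⟨A, B, ⟨hAne, hBne, hBpi, hBex, hAset, hHset⟩, ?_, ?_⟩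
  · -- derivation of the negative prime implicate
    have hpi : IsPrimeImplicate (Translation T C1 C2) (negClauseOf B) := hBpi.1
    have hgnB : GNeg (negClauseOf B) := by
      intro l hl
      obtain ⟨p, hp, rfl⟩ := Finset.mem_image.1 hl
      exact ⟨GAtm.conc (true, p.1) p.2, rfl⟩
    have hU : ∀ a ∈ ({a : GAtm | ∃ p ∈ B, a = GAtm.conc (true, p.1) p.2} ∪
        {GAtm.conc (false, C1) GTerm.sk0} : Set GAtm),
        (⟨false, a.toAtm⟩ : Lit) ∈ negClauseOf B ∨
        a = GAtm.conc (false, C1) GTerm.sk0 := by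
      intro a ha
      rcases ha with ⟨p, hp, rfl⟩ | ha
      · exact Or.inl (Finset.mem_image.2 ⟨p, hp, rfl⟩)
      · exact Or.inr ha
    have hLv : ∀ l ∈ negClauseOf B, ∃ (P : Bool × ℕ) (t : GTerm),
        l = ⟨false, Atm.conc P t.toTerm⟩ := by
      intro l hl
      obtain ⟨p, hp, rfl⟩ := Finset.mem_image.1 hl
      exact ⟨(true, p.1), p.2, rfl⟩
    have hreach : ∃ n, Reach T ({a : GAtm | ∃ p ∈ B, a = GAtm.conc (true, p.1) p.2} ∪
        {GAtm.conc (false, C1) GTerm.sk0}) n (GAtm.conc (true, C2) GTerm.sk0) := by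
      by_contra hnr
      have hC2 : GAtm.conc (true, C2) GTerm.sk0 ∉
          RM T ({a : GAtm | ∃ p ∈ B, a = GAtm.conc (true, p.1) p.2} ∪
            {GAtm.conc (false, C1) GTerm.sk0}) := hnr
      have hmod := aux_rm_models hNF _ (Set.mem_union_right _ (Set.mem_singleton _)) hC2
      obtain ⟨l, hl, hs⟩ := hpi.1 GTerm (herb _) hmod (fun _ => GTerm.sk0)
      obtain ⟨p, hp, rfl⟩ := Finset.mem_image.1 hl
      have hnsat : ¬ Atm.sat (herb (RM T ({a : GAtm | ∃ p ∈ B, a = GAtm.conc (true, p.1) p.2} ∪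
          {GAtm.conc (false, C1) GTerm.sk0}))) (fun _ => GTerm.sk0)
          ((GAtm.conc (true, p.1) p.2).toAtm) := hs
      rw [aux_sat_toAtm] at hnsat
      exact hnsat ⟨0, .unit 0 (Set.mem_union_left _ ⟨p, hp, rfl⟩)⟩
    obtain ⟨n, hn⟩ := hreach
    have hstart : Deriv (presat (Translation T C1 C2)) (fun c => (ClauseVars c).Subsingleton)
        ({⟨false, Atm.conc (true, C2) GTerm.sk0.toTerm⟩} : Clause) :=
      Deriv.hyp (Set.mem_union_left _ aux_c2_mem)
    obtain ⟨c', hd', hgn', hsub⟩ :=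
      aux_derivNeg _ (negClauseOf B) hU hLv n (true, C2) GTerm.sk0 hn _ hstart
        (fun l hl => ⟨GAtm.conc (true, C2) GTerm.sk0, Finset.mem_singleton.1 hl⟩)
        (Finset.mem_singleton_self _)
    have hsub' : c' ⊆ negClauseOf B := by
      intro x hx
      rcases Finset.mem_union.1 (hsub hx) with hx' | hx'
      · rw [Finset.erase_singleton] at hx'
        exact absurd hx' (Finset.notMem_empty x)
      · exact hx'
    have hcent : CEntails (Translation T C1 C2) c' := fun α I hI =>
      aux_deriv_sound hd' α I (aux_models_presat hI)
    have h3 : ClEntails (negClauseOf B) c' :=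
      hpi.2 c' hcent (aux_clentails_of_subset hsub')
    have hsup : negClauseOf B ⊆ c' := by
      intro l hl
      by_contra hnl
      have hmods : CModels (herb {a : GAtm | (⟨false, a.toAtm⟩ : Lit) ∈ c'})
          {negClauseOf B} := by
        intro d hd
        rw [Set.mem_singleton_iff] at hd
        subst hd
        intro ρ
        refine ⟨l, hl, ?_⟩
        obtain ⟨p, hp, rfl⟩ := Finset.mem_image.1 hl
        intro hAs
        exact hnl ((aux_sat_toAtm _ ρ (GAtm.conc (true, p.1) p.2)).1 hAs)
      obtain ⟨l', hl', hs'⟩ := h3 GTerm (herb _) hmods (fun _ => GTerm.sk0)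
      obtain ⟨a', rfl⟩ := hgn' l' hl'
      exact hs' ((aux_sat_toAtm _ _ a').2 hl')
    have hfin : c' = negClauseOf B := Finset.Subset.antisymm hsub' hsup
    exact hfin ▸ hd'
  · -- derivation of the positive units
    intro p hp
    have hpmem : p ∈ (↑A : Set (ℕ × GTerm)) := hp
    rw [hAset] at hpmem
    obtain ⟨hInP, -⟩ := hpmem
    have hcent : CEntails (Translation T C1 C2)
        ({⟨true, (GAtm.conc (false, p.1) p.2).toAtm⟩} : Clause) := hInP.1.1
    have hC2 : GAtm.conc (true, C2) GTerm.sk0 ∉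
        RM T {GAtm.conc (false, C1) GTerm.sk0} := by
      rintro ⟨n, hn⟩
      exact aux_noDup hn C2 GTerm.sk0 rfl
    have hmod := aux_rm_models hNF _ (Set.mem_singleton _) hC2
    obtain ⟨l, hl, hs⟩ := hcent GTerm (herb _) hmod (fun _ => GTerm.sk0)
    rw [Finset.mem_singleton] at hl
    subst hl
    have hsat : Atm.sat (herb (RM T {GAtm.conc (false, C1) GTerm.sk0}))
        (fun _ => GTerm.sk0) ((GAtm.conc (false, p.1) p.2).toAtm) := hs
    rw [aux_sat_toAtm] at hsat
    obtain ⟨n, hn⟩ := hsat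
    exact aux_derivPos hn

end ELAbd
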